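/- arXiv:1509.09092 — 5 statements merged into one kernel-verified Lean document; each statement's English description precedes it below -/
import Mathlib

section
/- The abstraction of the read statement v := a[i] is sound: if (x, i, a) ∈ γ(I♯₁) and v = a i, then (x, i, v, a) ∈ γ(I♯₂), where I♯₂ is the set of tuples generated from I♯₁ by the two Horn rules for the read statement. -/
theorem read_statement_sound {χ ι β : Type*}
    (I₁ : Set ((χ × ι) × (ι × β))) (I₂ : Set ((χ × ι × β) × (ι × β)))
    (hI₂ : I₂ = {p | (∃ x : χ, ∃ i k : ι, ∃ aᵢ aₖ : β,
        k ≠ i ∧ ((x, i), (k, aₖ)) ∈ I₁ ∧ ((x, i), (i, aᵢ)) ∈ I₁ ∧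
        p = ((x, i, aᵢ), (k, aₖ))) ∨
      (∃ x : χ, ∃ i : ι, ∃ aᵢ : β,
        ((x, i), (i, aᵢ)) ∈ I₁ ∧ p = ((x, i, aᵢ), (i, aᵢ)))}) :
    ∀ (x : χ) (i : ι) (a : ι → β) (v : β),
      (∀ k : ι, ((x, i), (k, a k)) ∈ I₁) → v = a i →
      ∀ k : ι, ((x, i, v), (k, a k)) ∈ I₂ := by
  rintro x i a v ha rfl k
  subst hI₂
  rcases eq_or_ne k i with rfl | hki
  · exact Or.inr ⟨x, k, a k, ha k, rfl⟩
  · exact Or.inl ⟨x, i, k, a i, a k, hki, ha k, ha i, rfl⟩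
end

section
/- The abstraction of the write statement a[i] := v is sound: if (x, i, v, a) ∈ γ(I♯₁), then (x, i, v, a') ∈ γ(I♯₂), where a' is a updated at index i with value v (a' i = v and a' k = a k for k ≠ i), and I♯₂ is generated from I♯₁ by the two write Horn rules. -/
theorem write_statement_sound {χ ι β : Type*} [DecidableEq ι]
    (I₁ I₂ : Set ((χ × ι × β) × (ι × β)))
    (hI₂ : I₂ = {p | (∃ x : χ, ∃ i k : ι, ∃ v aₖ : β,
        i ≠ k ∧ ((x, i, v), (k, aₖ)) ∈ I₁ ∧ p = ((x, i, v), (k, aₖ))) ∨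
      (∃ x : χ, ∃ i : ι, ∃ v aₖ : β,
        ((x, i, v), (i, aₖ)) ∈ I₁ ∧ p = ((x, i, v), (i, v)))}) :
    ∀ (x : χ) (i : ι) (v : β) (a : ι → β),
      (∀ k : ι, ((x, i, v), (k, a k)) ∈ I₁) →
      ∀ k : ι, ((x, i, v), (k, Function.update a i v k)) ∈ I₂ := by
  rintro x i v a ha k
  subst hI₂
  rcases eq_or_ne k i with rfl | hki
  · exact Or.inr ⟨x, k, v, a k, ha k, by rw [Function.update_self]⟩
  · exact Or.inl ⟨x, i, k, v, a k, hki.symm, ha k, by rw [Function.update_of_ne hki]⟩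
end

section
/- The two-index abstraction of the read statement v := a[i] is sound: if (x, i, a) ∈ γ₂≤(I♯₁), then (x, i, a i, a) ∈ γ₂≤(I♯₂), where I♯₂ is generated from I♯₁ by the four Horn rules of Definition 'Read statement, two indices k₁ ≤ k₂'. -/
/-- `γ₂≤(S)`: the concretization of a two-index abstraction `S` of arrays. -/
def twoIndexConcretization {σ ι β : Type*} [LinearOrder ι] (S : Set (σ × ι × β × ι × β)) :
    Set (σ × (ι → β)) :=
  {p | ∀ k₁ k₂ : ι, k₁ ≤ k₂ → (p.1, k₁, p.2 k₁, k₂, p.2 k₂) ∈ S}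

/-- The abstraction `I♯₂` of `v := a[i]` generated from `I♯₁` by the four Horn rules. -/
def readTwoIndices {χ β ι : Type*} [LinearOrder ι] (I₁ : Set ((χ × ι) × ι × β × ι × β)) :
    Set ((χ × ι × β) × ι × β × ι × β) :=
  {p |
    (∃ x : χ, ∃ i k₁ k₂ : ι, ∃ v a₁ a₂ : β,
      k₁ ≠ i ∧ i < k₂ ∧ ((x, i), k₁, a₁, k₂, a₂) ∈ I₁ ∧ ((x, i), i, v, k₂, a₂) ∈ I₁ ∧
      p = ((x, i, v), k₁, a₁, k₂, a₂)) ∨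
    (∃ x : χ, ∃ i k₁ k₂ : ι, ∃ v a₁ a₂ : β,
      k₂ ≠ i ∧ k₁ < i ∧ ((x, i), k₁, a₁, k₂, a₂) ∈ I₁ ∧ ((x, i), k₁, a₁, i, v) ∈ I₁ ∧
      p = ((x, i, v), k₁, a₁, k₂, a₂)) ∨
    (∃ x : χ, ∃ i k₂ : ι, ∃ v a₂ : β,
      i < k₂ ∧ ((x, i), i, v, k₂, a₂) ∈ I₁ ∧
      p = ((x, i, v), i, v, k₂, a₂)) ∨
    (∃ x : χ, ∃ i k₁ : ι, ∃ v a₁ : β,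
      k₁ ≤ i ∧ ((x, i), k₁, a₁, i, v) ∈ I₁ ∧
      p = ((x, i, v), k₁, a₁, i, v))}

/-- Which rule fires is decided by where `i` falls relative to `k₁ ≤ k₂`: rule (3) or (1) when
`i < k₂` (according as `k₁ = i` or not), rule (4) or (2) when `k₂ ≤ i` (according as `k₂ = i` or
not). -/
theorem readTwoIndices_sound {χ β ι : Type*} [LinearOrder ι]
    {I₁ : Set ((χ × ι) × ι × β × ι × β)} {x : χ} {i : ι} {a : ι → β}
    (h : ((x, i), a) ∈ twoIndexConcretization I₁) :
    ((x, i, a i), a) ∈ twoIndexConcretization (readTwoIndices I₁) := by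
  intro k₁ k₂ hk
  rcases lt_or_ge i k₂ with hi | hi
  · rcases eq_or_ne k₁ i with rfl | hk₁
    · exact Or.inr <| Or.inr <| Or.inl ⟨x, k₁, k₂, a k₁, a k₂, hi, h k₁ k₂ hk, rfl⟩
    · exact Or.inl ⟨x, i, k₁, k₂, a i, a k₁, a k₂, hk₁, hi, h k₁ k₂ hk, h i k₂ hi.le, rfl⟩
  · rcases hi.eq_or_lt with rfl | hi
    · exact Or.inr <| Or.inr <| Or.inr ⟨x, k₂, k₁, a k₂, a k₁, hk, h k₁ k₂ hk, rfl⟩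
    · have hk₁ : k₁ < i := hk.trans_lt hi
      exact Or.inr <| Or.inl
        ⟨x, i, k₁, k₂, a i, a k₁, a k₂, hi.ne, hk₁, h k₁ k₂ hk, h k₁ i hk₁.le, rfl⟩

theorem read_two_indices_sound {χ β : Type*} {ι : Type*} [LinearOrder ι]
    (I₁ : Set ((χ × ι) × ι × β × ι × β))
    (I₂ : Set ((χ × ι × β) × ι × β × ι × β))
    (hI₂ : I₂ = {p |
      (∃ x : χ, ∃ i k₁ k₂ : ι, ∃ v a₁ a₂ : β,
        k₁ ≠ i ∧ i < k₂ ∧ ((x, i), k₁, a₁, k₂, a₂) ∈ I₁ ∧ ((x, i), i, v, k₂, a₂) ∈ I₁ ∧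
        p = ((x, i, v), k₁, a₁, k₂, a₂)) ∨
      (∃ x : χ, ∃ i k₁ k₂ : ι, ∃ v a₁ a₂ : β,
        k₂ ≠ i ∧ k₁ < i ∧ ((x, i), k₁, a₁, k₂, a₂) ∈ I₁ ∧ ((x, i), k₁, a₁, i, v) ∈ I₁ ∧
        p = ((x, i, v), k₁, a₁, k₂, a₂)) ∨
      (∃ x : χ, ∃ i k₂ : ι, ∃ v a₂ : β,
        i < k₂ ∧ ((x, i), i, v, k₂, a₂) ∈ I₁ ∧
        p = ((x, i, v), i, v, k₂, a₂)) ∨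
      (∃ x : χ, ∃ i k₁ : ι, ∃ v a₁ : β,
        k₁ ≤ i ∧ ((x, i), k₁, a₁, i, v) ∈ I₁ ∧
        p = ((x, i, v), k₁, a₁, i, v))}) :
    ∀ (x : χ) (i : ι) (a : ι → β),
      (∀ k₁ k₂ : ι, k₁ ≤ k₂ → ((x, i), k₁, a k₁, k₂, a k₂) ∈ I₁) →
      ∀ k₁ k₂ : ι, k₁ ≤ k₂ → ((x, i, a i), k₁, a k₁, k₂, a k₂) ∈ I₂ := by
  intro x i a h
  subst hI₂
  exact readTwoIndices_sound (I₁ := I₁) h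
end

section
/- The two-index abstraction of the write statement a[i] := v is sound: if (x, i, v, a) ∈ γ₂≤(I♯₁) and a' = store(a, i, v), then (x, i, v, a') ∈ γ₂≤(I♯₂), where I♯₂ is generated from I♯₁ by the four Horn rules of Definition 'Write statement, two indices k₁ ≤ k₂'. -/
theorem write_two_indices_sound {χ β : Type*} {ι : Type*} [LinearOrder ι]
    (I₁ I₂ : Set ((χ × ι × β) × ι × β × ι × β))
    (hI₂ : I₂ = {p |
      (∃ x : χ, ∃ i k₁ k₂ : ι, ∃ v a₁ a₂ : β,
        i ≠ k₁ ∧ i ≠ k₂ ∧ ((x, i, v), k₁, a₁, k₂, a₂) ∈ I₁ ∧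
        p = ((x, i, v), k₁, a₁, k₂, a₂)) ∨
      (∃ x : χ, ∃ i k₂ : ι, ∃ v a₁ a₂ : β,
        i ≠ k₂ ∧ ((x, i, v), i, a₁, k₂, a₂) ∈ I₁ ∧
        p = ((x, i, v), i, v, k₂, a₂)) ∨
      (∃ x : χ, ∃ i k₁ : ι, ∃ v a₁ a₂ : β,
        i ≠ k₁ ∧ ((x, i, v), k₁, a₁, i, a₂) ∈ I₁ ∧
        p = ((x, i, v), k₁, a₁, i, v)) ∨
      (∃ x : χ, ∃ i : ι, ∃ v aₖ : β,
        ((x, i, v), i, aₖ, i, aₖ) ∈ I₁ ∧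
        p = ((x, i, v), i, v, i, v))}) :
    ∀ (x : χ) (i : ι) (v : β) (a : ι → β),
      (∀ k₁ k₂ : ι, k₁ ≤ k₂ → ((x, i, v), k₁, a k₁, k₂, a k₂) ∈ I₁) →
      ∀ k₁ k₂ : ι, k₁ ≤ k₂ →
        ((x, i, v), k₁, Function.update a i v k₁, k₂, Function.update a i v k₂) ∈ I₂ := by
  rintro x i v a ha k₁ k₂ hk
  subst hI₂
  obtain rfl | h₁ := eq_or_ne i k₁ <;> obtain rfl | h₂ := eq_or_ne i k₂
  · exact .inr <| .inr <| .inr ⟨x, i, v, a i, ha i i le_rfl, by simp⟩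
  · exact .inr <| .inl ⟨x, i, k₂, v, a i, a k₂, h₂, ha i k₂ hk, by simp [h₂.symm]⟩
  · exact .inr <| .inr <| .inl ⟨x, i, k₁, v, a k₁, a i, h₁, ha k₁ i hk, by simp [h₁.symm]⟩
  · exact .inl ⟨x, i, k₁, k₂, v, a k₁, a k₂, h₁, h₂, ha k₁ k₂ hk, by simp [h₁.symm, h₂.symm]⟩
end

section
/- The multiset-tracking abstraction of the write statement is sound: if (x, i, v, a) ∈ γ#(I♯₁) and a' = store(a, i, v), then (x, i, v, a') ∈ γ#(I♯₂), where I♯₂ is obtained from I♯₁ by composing the decrement rules (through intermediate predicate I♯ₐ), the increment rules (through intermediate predicate I♯_b), and the array-update rules of Definition 'Write statement' with counts. -/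
/-!
Write `cnt a z` for the number of indices `j` with `a j = z`. Storing `v` at `i` changes exactly one
entry, so `cnt (update a i v) z = cnt a z - [a i = z] + [v = z]`, where the subtraction does not
truncate because `i` itself is counted in `cnt a (a i)`. The decrement rules produce the first two
terms of this expression from the facts of `I♯₁`, the increment rules add the third, and the
update rules replace the entry at `i` by `v` while carrying the counts along.
-/

open Finset Function

section WriteRules

variable {χ β ι : Type*}

def decrCountRule (I : Set ((χ × β × ι) × (ι × β) × (β × ℕ))) :
    Set ((χ × β × ι) × (ι × β) × (β × ℕ)) :=
  {p |
    (∃ x : χ, ∃ i k : ι, ∃ v aᵢ aₖ z : β, ∃ c : ℕ,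
      aᵢ ≠ z ∧ ((x, v, i), (k, aₖ), (z, c)) ∈ I ∧ ((x, v, i), (i, aᵢ), (z, c)) ∈ I ∧
      p = ((x, v, i), (k, aₖ), (z, c))) ∨
    (∃ x : χ, ∃ i k : ι, ∃ v aᵢ aₖ : β, ∃ c : ℕ,
      ((x, v, i), (k, aₖ), (aᵢ, c)) ∈ I ∧ ((x, v, i), (i, aᵢ), (aᵢ, c)) ∈ I ∧
      p = ((x, v, i), (k, aₖ), (aᵢ, c - 1)))}

def incrCountRule (I : Set ((χ × β × ι) × (ι × β) × (β × ℕ))) :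
    Set ((χ × β × ι) × (ι × β) × (β × ℕ)) :=
  {p |
    (∃ x : χ, ∃ i k : ι, ∃ v aᵢ aₖ z : β, ∃ c : ℕ,
      v ≠ z ∧ ((x, v, i), (k, aₖ), (z, c)) ∈ I ∧ ((x, v, i), (i, aᵢ), (z, c)) ∈ I ∧
      p = ((x, v, i), (k, aₖ), (z, c))) ∨
    (∃ x : χ, ∃ i k : ι, ∃ v aᵢ aₖ : β, ∃ c : ℕ,
      ((x, v, i), (k, aₖ), (v, c)) ∈ I ∧ ((x, v, i), (i, aᵢ), (v, c)) ∈ I ∧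
      p = ((x, v, i), (k, aₖ), (v, c + 1)))}

def storeRule (I : Set ((χ × β × ι) × (ι × β) × (β × ℕ))) :
    Set ((χ × β × ι) × (ι × β) × (β × ℕ)) :=
  {p |
    (∃ x : χ, ∃ i k : ι, ∃ v aₖ z : β, ∃ c : ℕ,
      i ≠ k ∧ ((x, v, i), (k, aₖ), (z, c)) ∈ I ∧
      p = ((x, v, i), (k, aₖ), (z, c))) ∨
    (∃ x : χ, ∃ i : ι, ∃ v aₖ z : β, ∃ c : ℕ,
      ((x, v, i), (i, aₖ), (z, c)) ∈ I ∧
      p = ((x, v, i), (i, v), (z, c)))}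

variable {I : Set ((χ × β × ι) × (ι × β) × (β × ℕ))} {x : χ} {i : ι} {v : β} {a : ι → β}
  {n : β → ℕ}

theorem mem_decrCountRule_of_forall_mem [DecidableEq β]
    (h : ∀ k z, ((x, v, i), (k, a k), (z, n z)) ∈ I) (k : ι) (z : β) :
    ((x, v, i), (k, a k), (z, n z - if a i = z then 1 else 0)) ∈ decrCountRule I := by
  by_cases hz : a i = z
  · subst hz
    exact Or.inr ⟨x, i, k, v, a i, a k, n (a i), h k (a i), h i (a i), by simp⟩
  · exact Or.inl ⟨x, i, k, v, a i, a k, z, n z, hz, h k z, h i z, by simp [hz]⟩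

theorem mem_incrCountRule_of_forall_mem [DecidableEq β]
    (h : ∀ k z, ((x, v, i), (k, a k), (z, n z)) ∈ I) (k : ι) (z : β) :
    ((x, v, i), (k, a k), (z, n z + if v = z then 1 else 0)) ∈ incrCountRule I := by
  by_cases hz : v = z
  · subst hz
    exact Or.inr ⟨x, i, k, v, a i, a k, n v, h k v, h i v, by simp⟩
  · exact Or.inl ⟨x, i, k, v, a i, a k, z, n z, hz, h k z, h i z, by simp [hz]⟩

theorem mem_storeRule_of_forall_mem [DecidableEq ι]
    (h : ∀ k z, ((x, v, i), (k, a k), (z, n z)) ∈ I) (k : ι) (z : β) :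
    ((x, v, i), (k, update a i v k), (z, n z)) ∈ storeRule I := by
  by_cases hk : k = i
  · subst hk
    exact Or.inr ⟨x, k, v, a k, z, n z, h k z, by simp⟩
  · exact Or.inl ⟨x, i, k, v, a k, z, n z, Ne.symm hk, h k z, by simp [hk]⟩

end WriteRules

theorem card_filter_update_eq {ι β : Type*} [Fintype ι] [DecidableEq ι] [DecidableEq β]
    (a : ι → β) (i : ι) (v z : β) :
    #{j | update a i v j = z} = #{j | a j = z} - (if a i = z then 1 else 0) +
      (if v = z then 1 else 0) := by
  have hsplit : ∀ f : ι → β, #{j | f j = z} =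
      (if f i = z then 1 else 0) + ∑ j ∈ univ.erase i, if f j = z then 1 else 0 := fun f => by
    rw [card_filter, ← add_sum_erase _ _ (mem_univ i)]
  have hrest : ∑ j ∈ univ.erase i, (if update a i v j = z then 1 else 0) =
      ∑ j ∈ univ.erase i, if a j = z then 1 else 0 :=
    sum_congr rfl fun j hj => by rw [update_of_ne (ne_of_mem_erase hj)]
  rw [hsplit (update a i v), hsplit a, hrest, update_self]
  split_ifs <;> omega

theorem write_with_counts_sound {χ β : Type*} {ι : Type*}
    [Fintype ι] [DecidableEq ι] [DecidableEq β]
    (I₁ Iₐ I_b I₂ : Set ((χ × β × ι) × (ι × β) × (β × ℕ)))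
    (hIₐ : Iₐ = {p |
      (∃ x : χ, ∃ i k : ι, ∃ v aᵢ aₖ z : β, ∃ c : ℕ,
        aᵢ ≠ z ∧ ((x, v, i), (k, aₖ), (z, c)) ∈ I₁ ∧ ((x, v, i), (i, aᵢ), (z, c)) ∈ I₁ ∧
        p = ((x, v, i), (k, aₖ), (z, c))) ∨
      (∃ x : χ, ∃ i k : ι, ∃ v aᵢ aₖ : β, ∃ c : ℕ,
        ((x, v, i), (k, aₖ), (aᵢ, c)) ∈ I₁ ∧ ((x, v, i), (i, aᵢ), (aᵢ, c)) ∈ I₁ ∧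
        p = ((x, v, i), (k, aₖ), (aᵢ, c - 1)))})
    (hI_b : I_b = {p |
      (∃ x : χ, ∃ i k : ι, ∃ v aᵢ aₖ z : β, ∃ c : ℕ,
        v ≠ z ∧ ((x, v, i), (k, aₖ), (z, c)) ∈ Iₐ ∧ ((x, v, i), (i, aᵢ), (z, c)) ∈ Iₐ ∧
        p = ((x, v, i), (k, aₖ), (z, c))) ∨
      (∃ x : χ, ∃ i k : ι, ∃ v aᵢ aₖ : β, ∃ c : ℕ,
        ((x, v, i), (k, aₖ), (v, c)) ∈ Iₐ ∧ ((x, v, i), (i, aᵢ), (v, c)) ∈ Iₐ ∧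
        p = ((x, v, i), (k, aₖ), (v, c + 1)))})
    (hI₂ : I₂ = {p |
      (∃ x : χ, ∃ i k : ι, ∃ v aₖ z : β, ∃ c : ℕ,
        i ≠ k ∧ ((x, v, i), (k, aₖ), (z, c)) ∈ I_b ∧
        p = ((x, v, i), (k, aₖ), (z, c))) ∨
      (∃ x : χ, ∃ i : ι, ∃ v aₖ z : β, ∃ c : ℕ,
        ((x, v, i), (i, aₖ), (z, c)) ∈ I_b ∧
        p = ((x, v, i), (i, v), (z, c)))}) :
    ∀ (x : χ) (i : ι) (v : β) (a : ι → β),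
      (∀ k : ι, ∀ z : β,
        ((x, v, i), (k, a k), (z, (Finset.univ.filter (fun j : ι => a j = z)).card)) ∈ I₁) →
      ∀ k : ι, ∀ z : β,
        ((x, v, i), (k, Function.update a i v k),
          (z, (Finset.univ.filter (fun j : ι => Function.update a i v j = z)).card)) ∈ I₂ := by
  intro x i v a h k z
  change Iₐ = decrCountRule I₁ at hIₐ
  change I_b = incrCountRule Iₐ at hI_b
  change I₂ = storeRule I_b at hI₂
  subst hIₐ hI_b hI₂
  rw [card_filter_update_eq]
  exact mem_storeRule_of_forall_mem
    (mem_incrCountRule_of_forall_mem (mem_decrCountRule_of_forall_mem h)) k z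
end
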